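/- The matrix t = (1/2)·[[j−k, 1−i], [−j−k, 1+i]] permutes the five MUB lines cyclically: it maps the line of (1,0) to the line of (1,−i), which maps to the line of (1,k), then to the line of (1,−1), then to the line of (1,j), then back to the line of (1,0). Concretely, t·(1,0)ᵀ is a right scalar multiple of (1,−i)ᵀ, t·(1,−i)ᵀ is a right scalar multiple of (1,k)ᵀ, t·(1,k)ᵀ of (1,−1)ᵀ, t·(1,−1)ᵀ of (1,j)ᵀ, and t·(1,j)ᵀ of (1,0)ᵀ. -/

import Mathlib

noncomputable section
open Quaternion Matrix

abbrev HQ := ℍ[ℝ]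
def qi : HQ := ⟨0,1,0,0⟩
def qj : HQ := ⟨0,0,1,0⟩
def qk : HQ := ⟨0,0,0,1⟩

/-- Inner product on the right ℍ-module ℍ^d. -/
def inprod {d : ℕ} (v w : Fin d → HQ) : HQ := ∑ m, star (v m) * w m


/-- The matrix t = (1/2)[[j−k, 1−i],[−j−k, 1+i]]. -/
def tMat : Matrix (Fin 2) (Fin 2) HQ :=
  (((2:ℝ)⁻¹ : HQ)) • !![qj - qk, 1 - qi; -qj - qk, 1 + qi]

/-- A maps the line of v to the line of w: Av is a nonzero right scalar
multiple of w. -/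
def MapsLine (A : Matrix (Fin 2) (Fin 2) HQ) (v w : Fin 2 → HQ) : Prop :=
  ∃ lam : HQ, lam ≠ 0 ∧ A.mulVec v = fun m => w m * lam
/-! Because the target vectors have first coordinate 1, the only candidate multiplier is the
first coordinate of `t v`; each claim thus becomes a pair of quaternion identities, checked
componentwise. -/

theorem mapsLine_one_iff {A : Matrix (Fin 2) (Fin 2) HQ} {v : Fin 2 → HQ} {x : HQ} :
    MapsLine A v ![1, x] ↔ (A *ᵥ v) 0 ≠ 0 ∧ (A *ᵥ v) 1 = x * (A *ᵥ v) 0 := by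
  constructor
  · rintro ⟨lam, hlam, h⟩
    simp [h, hlam]
  · rintro ⟨h0, h1⟩
    refine ⟨(A *ᵥ v) 0, h0, funext fun m => ?_⟩
    fin_cases m <;> simp [h1]

theorem tMat_mulVec (y : HQ) :
    tMat *ᵥ ![1, y] =
      ![(2⁻¹ : ℝ) • (qj - qk + (1 - qi) * y), (2⁻¹ : ℝ) • (-qj - qk + (1 + qi) * y)] := by
  ext m : 1
  fin_cases m <;>
    simp [tMat, Matrix.mulVec, dotProduct, Fin.sum_univ_two, ← Quaternion.coe_inv,
      Quaternion.coe_mul_eq_smul, smul_add]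

/-- t cyclically permutes the five MUB lines:
(1,0) → (1,−i) → (1,k) → (1,−1) → (1,j) → (1,0). -/
theorem tMat_cycles_MUB_lines :
    MapsLine tMat ![1, 0] ![1, -qi] ∧
    MapsLine tMat ![1, -qi] ![1, qk] ∧
    MapsLine tMat ![1, qk] ![1, -1] ∧
    MapsLine tMat ![1, -1] ![1, qj] ∧
    MapsLine tMat ![1, qj] ![1, 0] := by
  simp only [mapsLine_one_iff, tMat_mulVec, Matrix.cons_val_zero, Matrix.cons_val_one, Ne,
    Quaternion.ext_iff]
  -- distribute the components first: once `qi`, `qj`, `qk` are unfolded, the quaternion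
  -- `re_sub`/`re_mul` lemmas no longer match the anonymous-constructor terms
  simp
  simp [qi, qj, qk]
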